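/- arXiv:math/0009071 — 3 statements merged into one kernel-verified Lean document; each statement's English description precedes it below -/
import Mathlib

section
/- Let p ≥ 2 and n ≥ 1. Suppose L : ℝ^p × ℝ^n × (ℝ^p → ℝ^n) ≅ ℝ^p × ℝ^n × ℝ^(n·p) → ℝ is smooth, h^{αβ} : ℝ^p → ℝ is a smooth symmetric nondegenerate matrix-valued function of t only, g_{ij} is a smooth symmetric function of (t, x, X) with values in invertible n×n matrices, and for all indices (1/2) ∂²L/∂X^i_α ∂X^j_β = h^{αβ}(t) g_{ij}(t,x,X). If there exist α ≠ β with h^{αβ}(t) ≠ 0 at every point t, then g_{ij} does not depend on the fiber variables X, i.e. ∂g_{ij}/∂X^k_γ = 0 for all i,j,k,γ. -/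
/-- Partial derivative of `f : ℝ^m → ℝ` in the `i`-th coordinate at `v`. -/
noncomputable def pd {m : ℕ} (f : (Fin m → ℝ) → ℝ) (i : Fin m) (v : Fin m → ℝ) : ℝ :=
  deriv (fun s => f (Function.update v i s)) (v i)

/-- Partial derivative of `f : ℝ^{n×p} → ℝ` in the fiber coordinate `X^i_α` at `X`. -/
noncomputable def pdM {n p : ℕ} (f : (Fin n → Fin p → ℝ) → ℝ) (i : Fin n) (α : Fin p)
    (X : Fin n → Fin p → ℝ) : ℝ :=
  deriv (fun s => f (fun j β => if j = i ∧ β = α then s else X j β)) (X i α)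

namespace Stmt0Aux

variable {n p : ℕ}

/-- Basis "matrix" with a 1 in slot `(i, α)`. -/
def E (n p : ℕ) (i : Fin n) (α : Fin p) : Fin n → Fin p → ℝ :=
  fun j β => if j = i ∧ β = α then 1 else 0

lemma curve_eq (X : Fin n → Fin p → ℝ) (i : Fin n) (α : Fin p) (s : ℝ) :
    (fun j β => if j = i ∧ β = α then s else X j β)
      = X + (s - X i α) • E n p i α := by
  funext j β
  by_cases h : j = i ∧ β = α
  · obtain ⟨rfl, rfl⟩ := h
    simp [E]
  · simp [E, h]

lemma pdM_eq {f : (Fin n → Fin p → ℝ) → ℝ} {X : Fin n → Fin p → ℝ}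
    (hf : DifferentiableAt ℝ f X) (i : Fin n) (α : Fin p) :
    pdM f i α X = fderiv ℝ f X (E n p i α) := by
  have hc : HasDerivAt (fun s : ℝ => X + (s - X i α) • E n p i α) (E n p i α) (X i α) := by
    simpa using (((hasDerivAt_id (X i α)).sub_const (X i α)).smul_const (E n p i α)).const_add X
  have hXeq : X + ((X i α) - X i α) • E n p i α = X := by simp
  have hf' : HasFDerivAt f (fderiv ℝ f X) (X + ((X i α) - X i α) • E n p i α) := by
    rw [hXeq]; exact hf.hasFDerivAt
  have h3 : (fun s => f (fun j β => if j = i ∧ β = α then s else X j β))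
      = fun s => f (X + (s - X i α) • E n p i α) := by
    funext s; rw [curve_eq]
  have h4 := hf'.comp_hasDerivAt (X i α) hc
  unfold pdM
  rw [h3]
  exact h4.deriv

lemma pdM_const_mul (c : ℝ) (φ : (Fin n → Fin p → ℝ) → ℝ) (k : Fin n) (γ : Fin p)
    (X : Fin n → Fin p → ℝ) :
    pdM (fun X' => c * φ X') k γ X = c * pdM φ k γ X := by
  unfold pdM
  exact deriv_const_mul_field c

lemma pdM_comm {f : (Fin n → Fin p → ℝ) → ℝ} (hf : ContDiff ℝ (⊤ : ℕ∞) f)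
    (i k : Fin n) (α γ : Fin p) (X : Fin n → Fin p → ℝ) :
    pdM (fun X' => pdM f i α X') k γ X = pdM (fun X' => pdM f k γ X') i α X := by
  have hdf : ContDiff ℝ (⊤ : ℕ∞) (fderiv ℝ f) := hf.fderiv_right (by simp)
  have hrepr : ∀ (j : Fin n) (β : Fin p),
      (fun X' => pdM f j β X') = fun X' => fderiv ℝ f X' (E n p j β) := by
    intro j β; funext X'; exact pdM_eq (hf.differentiable (by simp) X') j β
  have happ : ∀ (j : Fin n) (β : Fin p),
      DifferentiableAt ℝ (fun X' => fderiv ℝ f X' (E n p j β)) X :=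
    fun j β => (hdf.differentiable (by simp) X).clm_apply (differentiableAt_const _)
  have key : ∀ (j m : Fin n) (β μ : Fin p),
      pdM (fun X' => pdM f j β X') m μ X
        = fderiv ℝ (fderiv ℝ f) X (E n p m μ) (E n p j β) := by
    intro j m β μ
    rw [hrepr j β, pdM_eq (happ j β) m μ,
      fderiv_clm_apply (hdf.differentiable (by simp) X) (differentiableAt_const _)]
    simp
  rw [key i k α γ, key k i γ α]
  exact second_derivative_symmetric (fun y => (hf.differentiable (by simp) y).hasFDerivAt)
    ((hdf.differentiable (by simp) X).hasFDerivAt) _ _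

end Stmt0Aux

open Stmt0Aux in
theorem stmt0 (p n : ℕ) (hp : 2 ≤ p) (hn : 1 ≤ n)
    (L : (Fin p → ℝ) × (Fin n → ℝ) × (Fin n → Fin p → ℝ) → ℝ)
    (hL : ContDiff ℝ (⊤ : ℕ∞) L)
    (hI hIlow : (Fin p → ℝ) → Fin p → Fin p → ℝ)
    (hhI : ContDiff ℝ (⊤ : ℕ∞) hI)
    (hIsymm : ∀ t α β, hI t α β = hI t β α)
    (hIinv : ∀ t α γ, (∑ β, hI t α β * hIlow t β γ) = if α = γ then (1:ℝ) else 0)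
    (hIinv' : ∀ t α γ, (∑ β, hIlow t α β * hI t β γ) = if α = γ then (1:ℝ) else 0)
    (g : (Fin p → ℝ) × (Fin n → ℝ) × (Fin n → Fin p → ℝ) → Fin n → Fin n → ℝ)
    (hg : ContDiff ℝ (⊤ : ℕ∞) g)
    (hgsymm : ∀ v i j, g v i j = g v j i)
    (ginv : (Fin p → ℝ) × (Fin n → ℝ) × (Fin n → Fin p → ℝ) → Fin n → Fin n → ℝ)
    (hginv : ∀ v i k, (∑ j, g v i j * ginv v j k) = if i = k then (1:ℝ) else 0)
    (hreg : ∀ t x X (i j : Fin n) (α β : Fin p),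
      (1/2 : ℝ) * pdM (fun X' => pdM (fun X'' => L (t, x, X'')) j β X') i α X
        = hI t α β * g (t, x, X) i j)
    (hex : ∃ α β : Fin p, α ≠ β ∧ ∀ t, hI t α β ≠ 0) :
    ∀ t x X (i j k : Fin n) (γ : Fin p),
      pdM (fun X' => g (t, x, X') i j) k γ X = 0 := by
  intro t x X i j k γ
  set f : (Fin n → Fin p → ℝ) → ℝ := fun X'' => L (t, x, X'') with hfdef
  have hf : ContDiff ℝ (⊤ : ℕ∞) f :=
    hL.comp (contDiff_const.prodMk (contDiff_const.prodMk contDiff_id))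
  have hφ : ∀ (j' : Fin n) (β : Fin p), ContDiff ℝ (⊤ : ℕ∞) (fun X' => pdM f j' β X') := by
    intro j' β
    have : (fun X' => pdM f j' β X') = fun X' => fderiv ℝ f X' (E n p j' β) := by
      funext X'; exact pdM_eq (hf.differentiable (by simp) X') j' β
    rw [this]
    exact (hf.fderiv_right (by simp)).clm_apply contDiff_const
  -- the key exchange relation
  have claim : ∀ (α β : Fin p) (i' k' : Fin n),
      hI t α β * pdM (fun X' => g (t, x, X') i' j) k' γ X
        = hI t γ β * pdM (fun X' => g (t, x, X') k' j) i' α X := by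
    intro α β i' k'
    calc hI t α β * pdM (fun X' => g (t, x, X') i' j) k' γ X
        = pdM (fun X' => hI t α β * g (t, x, X') i' j) k' γ X := by
          rw [pdM_const_mul]
      _ = pdM (fun X' => (1/2 : ℝ) * pdM (fun X'' => pdM f j β X'') i' α X') k' γ X := by
          congr 1; funext X'; rw [hreg t x X' i' j α β]
      _ = (1/2 : ℝ) * pdM (fun X' => pdM (fun X'' => pdM f j β X'') i' α X') k' γ X := by
          rw [pdM_const_mul]
      _ = (1/2 : ℝ) * pdM (fun X' => pdM (fun X'' => pdM f j β X'') k' γ X') i' α X := by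
          rw [pdM_comm (hφ j β)]
      _ = pdM (fun X' => (1/2 : ℝ) * pdM (fun X'' => pdM f j β X'') k' γ X') i' α X := by
          rw [pdM_const_mul]
      _ = pdM (fun X' => hI t γ β * g (t, x, X') k' j) i' α X := by
          congr 1; funext X'; rw [hreg t x X' k' j γ β]
      _ = hI t γ β * pdM (fun X' => g (t, x, X') k' j) i' α X := by
          rw [pdM_const_mul]
  -- contraction with the inverse matrix
  have hcontr : ∀ (α μ : Fin p),
      (if α = μ then (1:ℝ) else 0) * pdM (fun X' => g (t, x, X') i j) k γ X
        = (if γ = μ then (1:ℝ) else 0) * pdM (fun X' => g (t, x, X') k j) i α X := by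
    intro α μ
    have h1 : (∑ β, hI t α β * hIlow t β μ) * pdM (fun X' => g (t, x, X') i j) k γ X
        = (∑ β, hI t γ β * hIlow t β μ) * pdM (fun X' => g (t, x, X') k j) i α X := by
      rw [Finset.sum_mul, Finset.sum_mul]
      refine Finset.sum_congr rfl fun β _ => ?_
      calc hI t α β * hIlow t β μ * pdM (fun X' => g (t, x, X') i j) k γ X
          = (hI t α β * pdM (fun X' => g (t, x, X') i j) k γ X) * hIlow t β μ := by ring
        _ = (hI t γ β * pdM (fun X' => g (t, x, X') k j) i α X) * hIlow t β μ := by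
            rw [claim α β i k]
        _ = hI t γ β * hIlow t β μ * pdM (fun X' => g (t, x, X') k j) i α X := by ring
    rwa [hIinv t α μ, hIinv t γ μ] at h1
  have : Nontrivial (Fin p) := Fin.nontrivial_iff_two_le.mpr hp
  obtain ⟨α, hα⟩ := exists_ne γ
  have := hcontr α α
  simp [Ne.symm hα] at this
  exact this
end

section
/- Let p ≥ 2 and suppose L : ℝ^p × ℝ^n × ℝ^{n×p} → ℝ is smooth and satisfies, for a diagonal metric h^{αβ} = h^α δ^{αβ} with each h^α(t) ≠ 0: (a) ∂²L/∂X^i_α ∂X^j_β = 0 for all α ≠ β; (b) (1/(2h^α(t))) ∂²L/∂X^i_α ∂X^j_α = g_{ij}(t,x,X) for all α (no sum convention issues: the same g for every α). Then g_{ij} does not depend on X, i.e. ∂g_{ij}/∂X^k_γ = 0 for all k, γ. -/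
noncomputable def dirM {n p : ℕ} (i : Fin n) (α : Fin p) : Fin n → Fin p → ℝ :=
  fun j β => if j = i ∧ β = α then 1 else 0

lemma curve_eq {n p : ℕ} (i : Fin n) (α : Fin p) (X : Fin n → Fin p → ℝ) (s : ℝ) :
    (fun j β => if j = i ∧ β = α then s else X j β)
      = X + (s - X i α) • dirM i α := by
  funext j β
  simp only [Pi.add_apply, Pi.smul_apply, dirM, smul_eq_mul]
  by_cases h : j = i ∧ β = α
  · obtain ⟨rfl, rfl⟩ := h; simp
  · simp [h]

lemma hasDerivAt_curve {n p : ℕ} (i : Fin n) (α : Fin p) (X : Fin n → Fin p → ℝ) (s : ℝ) :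
    HasDerivAt (fun s => X + (s - X i α) • dirM i α) (dirM i α) s := by
  have h1 : HasDerivAt (fun u : ℝ => u - X i α) 1 s := (hasDerivAt_id s).sub_const _
  have := h1.smul_const (dirM (n := n) (p := p) i α)
  simpa using this.const_add X

lemma pdM_eq_fderiv {n p : ℕ} (f : (Fin n → Fin p → ℝ) → ℝ) (hf : Differentiable ℝ f)
    (i : Fin n) (α : Fin p) (X : Fin n → Fin p → ℝ) :
    pdM f i α X = fderiv ℝ f X (dirM i α) := by
  have hc : (fun s => f (fun j β => if j = i ∧ β = α then s else X j β))
      = fun s => f (X + (s - X i α) • dirM i α) := by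
    funext s; rw [curve_eq]
  have hd : HasDerivAt (fun s => f (X + (s - X i α) • dirM i α))
      (fderiv ℝ f X (dirM i α)) (X i α) := by
    have h0 : (X + ((X i α) - X i α) • dirM i α) = X := by simp
    have hF : HasFDerivAt f (fderiv ℝ f X) (X + ((X i α) - X i α) • dirM i α) := by
      rw [h0]; exact (hf X).hasFDerivAt
    have := hF.comp_hasDerivAt (X i α) (hasDerivAt_curve i α X (X i α))
    exact this
  rw [pdM, hc, hd.deriv]

lemma pdM_contDiff {n p : ℕ} (f : (Fin n → Fin p → ℝ) → ℝ) (hf : ContDiff ℝ (⊤ : ℕ∞) f)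
    (j : Fin n) (α : Fin p) : ContDiff ℝ (⊤ : ℕ∞) (fun X => pdM f j α X) := by
  have h1 : ContDiff ℝ (⊤ : ℕ∞) (fun X => fderiv ℝ f X (dirM j α)) :=
    (hf.fderiv_right (by simp)).clm_apply contDiff_const
  have h2 : (fun X => pdM f j α X) = fun X => fderiv ℝ f X (dirM j α) :=
    funext fun X => pdM_eq_fderiv f (hf.differentiable (by simp)) j α X
  rw [h2]; exact h1

lemma const_along {n p : ℕ} (F : (Fin n → Fin p → ℝ) → ℝ) (hF : Differentiable ℝ F)
    (k : Fin n) (γ : Fin p) (hz : ∀ Z, pdM F k γ Z = 0) (X : Fin n → Fin p → ℝ) (s : ℝ) :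
    F (fun j β => if j = k ∧ β = γ then s else X j β) = F X := by
  set c : ℝ → (Fin n → Fin p → ℝ) := fun u => X + (u - X k γ) • dirM k γ with hc
  have hφd : Differentiable ℝ (fun u => F (c u)) := by
    intro u
    exact ((hF (c u)).hasFDerivAt.comp_hasDerivAt u (hasDerivAt_curve k γ X u)).differentiableAt
  have hφ0 : ∀ u, deriv (fun u => F (c u)) u = 0 := by
    intro u
    have h : HasDerivAt (fun u => F (c u)) ((fderiv ℝ F (c u)) (dirM k γ)) u :=
      (hF (c u)).hasFDerivAt.comp_hasDerivAt u (hasDerivAt_curve k γ X u)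
    rw [h.deriv]
    have := pdM_eq_fderiv F hF k γ (c u)
    rw [← this]; exact hz (c u)
  have hconst := is_const_of_deriv_eq_zero hφd hφ0 s (X k γ)
  have h1 : c s = fun j β => if j = k ∧ β = γ then s else X j β := (curve_eq k γ X s).symm
  have h2 : c (X k γ) = X := by rw [hc]; simp
  rw [← h1, ← h2]; exact hconst

theorem stmt1 (p n : ℕ) (hp : 2 ≤ p) (hn : 1 ≤ n)
    (L : (Fin p → ℝ) × (Fin n → ℝ) × (Fin n → Fin p → ℝ) → ℝ)
    (hL : ContDiff ℝ (⊤ : ℕ∞) L)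
    (hd : (Fin p → ℝ) → Fin p → ℝ)
    (hdsmooth : ContDiff ℝ (⊤ : ℕ∞) hd)
    (hdne : ∀ t α, hd t α ≠ 0)
    (g : (Fin p → ℝ) × (Fin n → ℝ) × (Fin n → Fin p → ℝ) → Fin n → Fin n → ℝ)
    (hg : ContDiff ℝ (⊤ : ℕ∞) g)
    (hgsymm : ∀ v i j, g v i j = g v j i)
    (ha : ∀ t x X (i j : Fin n) (α β : Fin p), α ≠ β →
      pdM (fun X' => pdM (fun X'' => L (t, x, X'')) j β X') i α X = 0)
    (hb : ∀ t x X (i j : Fin n) (α : Fin p),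
      (1 / (2 * hd t α)) * pdM (fun X' => pdM (fun X'' => L (t, x, X'')) j α X') i α X
        = g (t, x, X) i j) :
    ∀ t x X (i j k : Fin n) (γ : Fin p),
      pdM (fun X' => g (t, x, X') i j) k γ X = 0 := by
  intro t x X i j k γ
  haveI : Nontrivial (Fin p) := Fin.nontrivial_iff_two_le.mpr hp
  obtain ⟨α, hαγ⟩ := exists_ne γ
  -- f0 smooth
  set f0 : (Fin n → Fin p → ℝ) → ℝ := fun X'' => L (t, x, X'') with hf0
  have hf0s : ContDiff ℝ (⊤ : ℕ∞) f0 :=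
    hL.comp (contDiff_const.prodMk (contDiff_const.prodMk contDiff_id))
  set F : (Fin n → Fin p → ℝ) → ℝ := fun X' => pdM f0 j α X' with hFdef
  have hFs : ContDiff ℝ (⊤ : ℕ∞) F := pdM_contDiff f0 hf0s j α
  have hFd : Differentiable ℝ F := hFs.differentiable (by simp)
  have hz : ∀ Z, pdM F k γ Z = 0 := fun Z => ha t x Z k j γ α (Ne.symm hαγ)
  have hconst := const_along F hFd k γ hz
  -- key: for any Z, pdM F i α (update of Z at (k,γ)) = pdM F i α Z ... we only need at X
  have hkey : ∀ s : ℝ,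
      pdM F i α (fun j' β => if j' = k ∧ β = γ then s else X j' β) = pdM F i α X := by
    intro s
    have hpt : (fun j' β => if j' = k ∧ β = γ then s else X j' β) i α = X i α := by
      by_cases h : i = k ∧ α = γ
      · exact absurd h.2 hαγ
      · simp [h]
    have hfun : ∀ u : ℝ,
        (fun j' β => if j' = i ∧ β = α then u else
          (fun j'' β' => if j'' = k ∧ β' = γ then s else X j'' β') j' β)
        = (fun j' β => if j' = k ∧ β = γ then s else
          (fun j'' β' => if j'' = i ∧ β' = α then u else X j'' β') j' β) := by
      intro u; funext j' β
      by_cases h1 : j' = i ∧ β = α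
      · obtain ⟨rfl, rfl⟩ := h1
        have : ¬ (j' = k ∧ β = γ) := fun h => absurd h.2 hαγ
        simp [this]
      · by_cases h2 : j' = k ∧ β = γ
        · obtain ⟨rfl, rfl⟩ := h2
          simp [h1]
        · simp [h1, h2]
    simp only [pdM, hpt]
    congr 1
    funext u
    rw [hfun u, hconst]
  have hgc : (fun s : ℝ => g (t, x, fun j' β => if j' = k ∧ β = γ then s else X j' β) i j)
      = fun _ => g (t, x, X) i j := by
    funext s
    rw [← hb t x _ i j α, ← hb t x X i j α]
    have := hkey s
    simp only [pdM, hFdef, hf0] at this ⊢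
    rw [this]
  simp only [pdM]
  rw [show (fun s : ℝ => (fun X' => g (t, x, X') i j)
      (fun j' β => if j' = k ∧ β = γ then s else X j' β))
    = fun _ : ℝ => g (t, x, X) i j from hgc, deriv_const]
end

section
/- Let L : ℝ × ℝ^n × ℝ^n → ℝ, (t,x,y) ↦ L(t,x,y), be smooth with (1/2) ∂²L/∂y^i ∂y^j = h^{11}(t) g_{ij}(t,x,y), where h^{11}(t) ≠ 0 and g is symmetric invertible. For a smooth curve x(t), the Euler–Lagrange expression of 𝓛 = L·√|h₁₁| can be written as 2 h^{11} g_{ik} (d²x^k/dt² + 2𝒢^k) = 0, where 2𝒢^k = (g^{ki}/2)[ (∂²L/∂x^j∂y^i) y^j − ∂L/∂x^i + ∂²L/∂t∂y^i + (∂L/∂y^i) H¹₁₁ + 2 g_{ij} h^{11} H¹₁₁ y^j ] with y^j = dx^j/dt and H¹₁₁ the Christoffel symbol of h₁₁(t). Equivalently: the Euler–Lagrange equations d/dt(∂𝓛/∂y^i) − ∂𝓛/∂x^i = 0 hold iff Δ_h x^k + 2𝒢^k = 0 for all k, where Δ_h x^k = h^{11}(x''^k − H¹₁₁ x'^k). 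-/
lemma stmt15_update {n : ℕ} (y : Fin n → ℝ) (i : Fin n) (s : ℝ) :
    HasDerivAt (fun z : ℝ => Function.update y i z) (Pi.single i 1) s := by
  apply hasDerivAt_pi.mpr
  intro j
  rcases eq_or_ne j i with h | h
  · subst h; simpa [Function.update_apply, Pi.single_apply] using (hasDerivAt_id' s)
  · simpa [Function.update_apply, h, Pi.single_apply] using hasDerivAt_const s (y j)

lemma stmt15_pd_slice_y {n : ℕ} (F : ℝ × (Fin n → ℝ) × (Fin n → ℝ) → ℝ)
    (hF : Differentiable ℝ F) (t : ℝ) (u y : Fin n → ℝ) (i : Fin n) :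
    pd (fun y' => F (t, u, y')) i y
      = fderiv ℝ F (t, u, y) (0, 0, Pi.single i 1) := by
  have hc : HasDerivAt
      (fun s : ℝ => ((t, (u, Function.update y i s)) : ℝ × (Fin n → ℝ) × (Fin n → ℝ)))
      ((0 : ℝ), ((0 : Fin n → ℝ), Pi.single i 1)) (y i) :=
    HasDerivAt.prodMk (hasDerivAt_const _ t) (HasDerivAt.prodMk (hasDerivAt_const _ u) (stmt15_update y i (y i)))
  have hF' : HasFDerivAt F (fderiv ℝ F (t, u, y)) (t, (u, Function.update y i (y i))) := by
    simpa using (hF (t, u, y)).hasFDerivAt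
  have := hF'.comp_hasDerivAt (y i) hc
  simpa [pd, Function.comp_def] using this.deriv

lemma stmt15_pd_slice_y_mul {n : ℕ} (F : ℝ × (Fin n → ℝ) × (Fin n → ℝ) → ℝ)
    (hF : Differentiable ℝ F) (t : ℝ) (u y : Fin n → ℝ) (i : Fin n) (c : ℝ) :
    pd (fun y' => F (t, u, y') * c) i y
      = fderiv ℝ F (t, u, y) (0, 0, Pi.single i 1) * c := by
  have hc : HasDerivAt
      (fun s : ℝ => ((t, (u, Function.update y i s)) : ℝ × (Fin n → ℝ) × (Fin n → ℝ)))
      ((0 : ℝ), ((0 : Fin n → ℝ), Pi.single i 1)) (y i) :=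
    HasDerivAt.prodMk (hasDerivAt_const _ t) (HasDerivAt.prodMk (hasDerivAt_const _ u) (stmt15_update y i (y i)))
  have hF' : HasFDerivAt F (fderiv ℝ F (t, u, y)) (t, (u, Function.update y i (y i))) := by
    simpa using (hF (t, u, y)).hasFDerivAt
  have := (hF'.comp_hasDerivAt (y i) hc).mul_const c
  simpa [pd] using this.deriv

lemma stmt15_pd_slice_x {n : ℕ} (F : ℝ × (Fin n → ℝ) × (Fin n → ℝ) → ℝ)
    (hF : Differentiable ℝ F) (t : ℝ) (u y : Fin n → ℝ) (i : Fin n) :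
    pd (fun u' => F (t, u', y)) i u
      = fderiv ℝ F (t, u, y) (0, Pi.single i 1, 0) := by
  have hc : HasDerivAt
      (fun s : ℝ => ((t, (Function.update u i s, y)) : ℝ × (Fin n → ℝ) × (Fin n → ℝ)))
      ((0 : ℝ), (Pi.single i 1, (0 : Fin n → ℝ))) (u i) :=
    HasDerivAt.prodMk (hasDerivAt_const _ t) (HasDerivAt.prodMk (stmt15_update u i (u i)) (hasDerivAt_const _ y))
  have hF' : HasFDerivAt F (fderiv ℝ F (t, u, y)) (t, (Function.update u i (u i), y)) := by
    simpa using (hF (t, u, y)).hasFDerivAt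
  have := hF'.comp_hasDerivAt (u i) hc
  simpa [pd, Function.comp_def] using this.deriv

lemma stmt15_pd_slice_x_mul {n : ℕ} (F : ℝ × (Fin n → ℝ) × (Fin n → ℝ) → ℝ)
    (hF : Differentiable ℝ F) (t : ℝ) (u y : Fin n → ℝ) (i : Fin n) (c : ℝ) :
    pd (fun u' => F (t, u', y) * c) i u
      = fderiv ℝ F (t, u, y) (0, Pi.single i 1, 0) * c := by
  have hc : HasDerivAt
      (fun s : ℝ => ((t, (Function.update u i s, y)) : ℝ × (Fin n → ℝ) × (Fin n → ℝ)))
      ((0 : ℝ), (Pi.single i 1, (0 : Fin n → ℝ))) (u i) :=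
    HasDerivAt.prodMk (hasDerivAt_const _ t) (HasDerivAt.prodMk (stmt15_update u i (u i)) (hasDerivAt_const _ y))
  have hF' : HasFDerivAt F (fderiv ℝ F (t, u, y)) (t, (Function.update u i (u i), y)) := by
    simpa using (hF (t, u, y)).hasFDerivAt
  have := (hF'.comp_hasDerivAt (u i) hc).mul_const c
  simpa [pd] using this.deriv

lemma stmt15_deriv_slice_t {n : ℕ} (F : ℝ × (Fin n → ℝ) × (Fin n → ℝ) → ℝ)
    (hF : Differentiable ℝ F) (t : ℝ) (u y : Fin n → ℝ) :
    deriv (fun s => F (s, u, y)) t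
      = fderiv ℝ F (t, u, y) (1, 0, 0) := by
  have hc : HasDerivAt
      (fun s : ℝ => ((s, (u, y)) : ℝ × (Fin n → ℝ) × (Fin n → ℝ)))
      ((1 : ℝ), ((0 : Fin n → ℝ), (0 : Fin n → ℝ))) t :=
    HasDerivAt.prodMk (hasDerivAt_id t) (HasDerivAt.prodMk (hasDerivAt_const _ u) (hasDerivAt_const _ y))
  have := ((hF (t, u, y)).hasFDerivAt).comp_hasDerivAt t hc
  simpa [Function.comp_def] using this.deriv

lemma stmt15_sqrtabs (h11 : ℝ → ℝ) (hh : ContDiff ℝ (⊤ : ℕ∞) h11) (hne : ∀ t, h11 t ≠ 0)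
    (H : ℝ → ℝ) (hH : ∀ t, H t = (h11 t)⁻¹ / 2 * deriv h11 t) (t : ℝ) :
    HasDerivAt (fun s => Real.sqrt |h11 s|) (H t * Real.sqrt |h11 t|) t := by
  have hd : HasDerivAt h11 (deriv h11 t) t :=
    ((hh.differentiable (by simp)) t).hasDerivAt
  have hcont : Continuous h11 := hh.continuous
  rcases (hne t).lt_or_gt with hlt | hlt
  · have hev : ∀ᶠ s in nhds t, h11 s < 0 :=
      (hcont.continuousAt).eventually_lt continuousAt_const hlt
    have heq : (fun s => Real.sqrt |h11 s|) =ᶠ[nhds t] fun s => Real.sqrt (-h11 s) := by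
      filter_upwards [hev] with s hs
      rw [abs_of_neg hs]
    have hpos : 0 < -h11 t := by linarith
    have h1 : HasDerivAt (fun s => Real.sqrt (-h11 s)) (-deriv h11 t / (2 * Real.sqrt (-h11 t))) t :=
      (hd.neg).sqrt (ne_of_gt hpos)
    have h2 : HasDerivAt (fun s => Real.sqrt |h11 s|) (-deriv h11 t / (2 * Real.sqrt (-h11 t))) t :=
      h1.congr_of_eventuallyEq heq
    convert h2 using 1
    have hs : Real.sqrt (-h11 t) * Real.sqrt (-h11 t) = -h11 t := Real.mul_self_sqrt hpos.le
    have hsp : 0 < Real.sqrt (-h11 t) := Real.sqrt_pos.mpr hpos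
    rw [abs_of_neg hlt, hH, eq_comm, div_eq_iff (by positivity)]
    have : ((h11 t)⁻¹ / 2 * deriv h11 t) * Real.sqrt (-h11 t) * (2 * Real.sqrt (-h11 t))
        = ((h11 t)⁻¹ / 2 * deriv h11 t) * 2 * (Real.sqrt (-h11 t) * Real.sqrt (-h11 t)) := by ring
    rw [this, hs]
    field_simp [hne t]
  · have hev : ∀ᶠ s in nhds t, 0 < h11 s :=
      continuousAt_const.eventually_lt (hcont.continuousAt) hlt
    have heq : (fun s => Real.sqrt |h11 s|) =ᶠ[nhds t] fun s => Real.sqrt (h11 s) := by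
      filter_upwards [hev] with s hs
      rw [abs_of_pos hs]
    have h1 : HasDerivAt (fun s => Real.sqrt (h11 s)) (deriv h11 t / (2 * Real.sqrt (h11 t))) t :=
      hd.sqrt (hne t)
    have h2 : HasDerivAt (fun s => Real.sqrt |h11 s|) (deriv h11 t / (2 * Real.sqrt (h11 t))) t :=
      h1.congr_of_eventuallyEq heq
    convert h2 using 1
    have hs : Real.sqrt (h11 t) * Real.sqrt (h11 t) = h11 t := Real.mul_self_sqrt hlt.le
    have hsp : 0 < Real.sqrt (h11 t) := Real.sqrt_pos.mpr hlt
    rw [abs_of_pos hlt, hH, eq_comm, div_eq_iff (by positivity)]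
    have : ((h11 t)⁻¹ / 2 * deriv h11 t) * Real.sqrt (h11 t) * (2 * Real.sqrt (h11 t))
        = ((h11 t)⁻¹ / 2 * deriv h11 t) * 2 * (Real.sqrt (h11 t) * Real.sqrt (h11 t)) := by ring
    rw [this, hs]
    field_simp [hne t]

lemma stmt15_curve {n : ℕ} (F : ℝ × (Fin n → ℝ) × (Fin n → ℝ) → ℝ)
    (hF : Differentiable ℝ F) (x x' x'' : ℝ → Fin n → ℝ) (t : ℝ)
    (hdx : HasDerivAt x (x' t) t) (hdx' : HasDerivAt x' (x'' t) t) :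
    HasDerivAt (fun s => F (s, x s, x' s))
      (fderiv ℝ F (t, x t, x' t) (1, x' t, x'' t)) t := by
  have hc : HasDerivAt (fun s : ℝ => ((s, (x s, x' s)) : ℝ × (Fin n → ℝ) × (Fin n → ℝ)))
      ((1 : ℝ), (x' t, x'' t)) t := HasDerivAt.prodMk (hasDerivAt_id t) (HasDerivAt.prodMk hdx hdx')
  exact (hF _).hasFDerivAt.comp_hasDerivAt t hc

lemma stmt15_vec {n : ℕ} (a b : Fin n → ℝ) :
    (((1 : ℝ), a, b) : ℝ × (Fin n → ℝ) × (Fin n → ℝ))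
      = ((1,0,0) : ℝ × (Fin n → ℝ) × (Fin n → ℝ))
        + (∑ j, a j • (((0 : ℝ), Pi.single j 1, 0) : ℝ × (Fin n → ℝ) × (Fin n → ℝ)))
        + (∑ j, b j • (((0 : ℝ), 0, Pi.single j 1) : ℝ × (Fin n → ℝ) × (Fin n → ℝ))) := by
  refine Prod.ext ?_ (Prod.ext ?_ ?_)
  · rw [Prod.fst_add, Prod.fst_add, Prod.fst_sum, Prod.fst_sum]
    simp
  · rw [Prod.snd_add, Prod.snd_add, Prod.fst_add, Prod.fst_add,
      Prod.snd_sum, Prod.snd_sum, Prod.fst_sum, Prod.fst_sum]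
    funext k
    simp [Finset.sum_apply, Pi.single_apply]
  · rw [Prod.snd_add, Prod.snd_add, Prod.snd_add, Prod.snd_add,
      Prod.snd_sum, Prod.snd_sum, Prod.snd_sum, Prod.snd_sum]
    funext k
    simp [Finset.sum_apply, Pi.single_apply]

theorem stmt15 (n : ℕ) (hn : 1 ≤ n)
    (L : ℝ × (Fin n → ℝ) × (Fin n → ℝ) → ℝ) (hL : ContDiff ℝ (⊤ : ℕ∞) L)
    (h11 : ℝ → ℝ) (hh : ContDiff ℝ (⊤ : ℕ∞) h11) (hne : ∀ t, h11 t ≠ 0)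
    (g gI : ℝ × (Fin n → ℝ) × (Fin n → ℝ) → Fin n → Fin n → ℝ)
    (hgs : ∀ z i j, g z i j = g z j i)
    (hgi1 : ∀ z i k, (∑ j, g z i j * gI z j k) = if i = k then (1:ℝ) else 0)
    (hgi2 : ∀ z i k, (∑ j, gI z i j * g z j k) = if i = k then (1:ℝ) else 0)
    (hreg : ∀ (t : ℝ) (u y : Fin n → ℝ) (i j : Fin n),
      (1/2 : ℝ) * pd (fun y' => pd (fun y'' => L (t, u, y'')) j y') i y
        = (h11 t)⁻¹ * g (t, u, y) i j)
    (H : ℝ → ℝ) (hH : ∀ t, H t = (h11 t)⁻¹ / 2 * deriv h11 t)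
    (x : ℝ → Fin n → ℝ) (hx : ContDiff ℝ (⊤ : ℕ∞) x)
    (x' : ℝ → Fin n → ℝ) (hx' : ∀ t i, x' t i = deriv (fun s => x s i) t)
    (x'' : ℝ → Fin n → ℝ) (hx'' : ∀ t i, x'' t i = deriv (fun s => x' s i) t)
    (Lag : ℝ × (Fin n → ℝ) × (Fin n → ℝ) → ℝ)
    (hLag : ∀ z, Lag z = L z * Real.sqrt |h11 z.1|)
    (twoG : ℝ → Fin n → ℝ)
    (htwoG : ∀ t (k : Fin n), twoG t k = ∑ i, gI (t, x t, x' t) k i / 2 *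
      ((∑ j, pd (fun u => pd (fun y => L (t, u, y)) i (x' t)) j (x t) * x' t j)
        - pd (fun u => L (t, u, x' t)) i (x t)
        + deriv (fun s => pd (fun y => L (s, x t, y)) i (x' t)) t
        + pd (fun y => L (t, x t, y)) i (x' t) * H t
        + 2 * (∑ j, g (t, x t, x' t) i j * (h11 t)⁻¹ * H t * x' t j))) :
    (∀ (i : Fin n) (t : ℝ),
        deriv (fun s => pd (fun y => Lag (s, x s, y)) i (x' s)) t
          - pd (fun u => Lag (t, u, x' t)) i (x t) = 0)
      ↔ (∀ (k : Fin n) (t : ℝ),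
        (h11 t)⁻¹ * (x'' t k - H t * x' t k) + twoG t k = 0) := by
  classical
  have hLd : Differentiable ℝ L := hL.differentiable (by simp)
  have hFvd : ∀ i : Fin n,
      Differentiable ℝ (fun z : ℝ × (Fin n → ℝ) × (Fin n → ℝ) =>
        fderiv ℝ L z (0, 0, Pi.single i 1)) := fun i =>
    (((hL.fderiv_right (m := 1) (WithTop.coe_le_coe.mpr le_top)).clm_apply contDiff_const).differentiable (by simp))
  have hdx : ∀ t, HasDerivAt x (x' t) t := by
    intro t
    apply hasDerivAt_pi.mpr
    intro i
    have hxi : ContDiff ℝ (⊤ : ℕ∞) (fun s => x s i) := contDiff_pi.mp hx i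
    have := ((hxi.differentiable (by simp)) t).hasDerivAt
    rw [hx' t i]
    exact this
  have hdx' : ∀ t, HasDerivAt x' (x'' t) t := by
    intro t
    apply hasDerivAt_pi.mpr
    intro i
    have hxi : ContDiff ℝ (⊤ : ℕ∞) (fun s => x s i) := contDiff_pi.mp hx i
    have hxi' : Differentiable ℝ (fun s => x' s i) := by
      have he : (fun s => x' s i) = deriv (fun s => x s i) := funext fun s => hx' s i
      rw [he]
      exact ((contDiff_infty_iff_deriv.mp (hxi.of_le (by simp))).2).differentiable
        (by simp)
    have := (hxi' t).hasDerivAt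
    rw [hx'' t i]
    exact this
  have hsq : ∀ t, Real.sqrt |h11 t| ≠ 0 :=
    fun t => ne_of_gt (Real.sqrt_pos.mpr (abs_pos.mpr (hne t)))
  -- the common bracket
  set S : Fin n → ℝ → ℝ := fun i t =>
      (∑ j, pd (fun u => pd (fun y => L (t, u, y)) i (x' t)) j (x t) * x' t j)
        - pd (fun u => L (t, u, x' t)) i (x t)
        + deriv (fun s => pd (fun y => L (s, x t, y)) i (x' t)) t
        + pd (fun y => L (t, x t, y)) i (x' t) * H t
        + 2 * (∑ j, g (t, x t, x' t) i j * (h11 t)⁻¹ * H t * x' t j)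
        + 2 * (h11 t)⁻¹ * ∑ j, g (t, x t, x' t) i j * (x'' t j - H t * x' t j)
    with hSdef
  -- Euler–Lagrange expression in terms of S
  have hELS : ∀ (i : Fin n) (t : ℝ),
      deriv (fun s => pd (fun y => Lag (s, x s, y)) i (x' s)) t
        - pd (fun u => Lag (t, u, x' t)) i (x t)
      = Real.sqrt |h11 t| * S i t := by
    intro i t
    have hA : ∀ s, pd (fun y => Lag (s, x s, y)) i (x' s)
        = (fun z : ℝ × (Fin n → ℝ) × (Fin n → ℝ) =>
            fderiv ℝ L z (0, 0, Pi.single i 1)) (s, x s, x' s) * Real.sqrt |h11 s| := by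
      intro s
      have he : (fun y => Lag (s, x s, y)) = fun y => L (s, x s, y) * Real.sqrt |h11 s| :=
        funext fun y => hLag _
      rw [he, stmt15_pd_slice_y_mul L hLd]
    have hB : deriv (fun s => pd (fun y => Lag (s, x s, y)) i (x' s)) t
        = fderiv ℝ (fun z : ℝ × (Fin n → ℝ) × (Fin n → ℝ) =>
              fderiv ℝ L z (0, 0, Pi.single i 1)) (t, x t, x' t) (1, x' t, x'' t)
              * Real.sqrt |h11 t|
          + fderiv ℝ L (t, x t, x' t) (0, 0, Pi.single i 1) * (H t * Real.sqrt |h11 t|) := by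
      have h1 : (fun s => pd (fun y => Lag (s, x s, y)) i (x' s))
          = fun s => (fun z : ℝ × (Fin n → ℝ) × (Fin n → ℝ) =>
              fderiv ℝ L z (0, 0, Pi.single i 1)) (s, x s, x' s) * Real.sqrt |h11 s| :=
        funext hA
      rw [h1]
      exact ((stmt15_curve _ (hFvd i) x x' x'' t (hdx t) (hdx' t)).mul
        (stmt15_sqrtabs h11 hh hne H hH t)).deriv
    have hC : pd (fun u => Lag (t, u, x' t)) i (x t)
        = fderiv ℝ L (t, x t, x' t) (0, Pi.single i 1, 0) * Real.sqrt |h11 t| := by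
      have he : (fun u => Lag (t, u, x' t)) = fun u => L (t, u, x' t) * Real.sqrt |h11 t| :=
        funext fun u => hLag _
      rw [he, stmt15_pd_slice_x_mul L hLd]
    have hD : fderiv ℝ (fun z : ℝ × (Fin n → ℝ) × (Fin n → ℝ) =>
          fderiv ℝ L z (0, 0, Pi.single i 1)) (t, x t, x' t) (1, x' t, x'' t)
        = fderiv ℝ (fun z : ℝ × (Fin n → ℝ) × (Fin n → ℝ) =>
              fderiv ℝ L z (0, 0, Pi.single i 1)) (t, x t, x' t) (1, 0, 0)
          + (∑ j, fderiv ℝ (fun z : ℝ × (Fin n → ℝ) × (Fin n → ℝ) =>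
              fderiv ℝ L z (0, 0, Pi.single i 1)) (t, x t, x' t) (0, Pi.single j 1, 0)
              * x' t j)
          + (∑ j, fderiv ℝ (fun z : ℝ × (Fin n → ℝ) × (Fin n → ℝ) =>
              fderiv ℝ L z (0, 0, Pi.single i 1)) (t, x t, x' t) (0, 0, Pi.single j 1)
              * x'' t j) := by
      have hd := ((hFvd i) (t, x t, x' t)).hasFDerivAt
      rw [show (((1 : ℝ), x' t, x'' t) : ℝ × (Fin n → ℝ) × (Fin n → ℝ)) = _
        from stmt15_vec (x' t) (x'' t)]
      rw [map_add, map_add, map_sum, map_sum]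
      simp only [map_smul, smul_eq_mul]
      congr 1
      · congr 1
        exact Finset.sum_congr rfl fun j _ => mul_comm _ _
      · exact Finset.sum_congr rfl fun j _ => mul_comm _ _
    -- identifications
    have hxy : ∀ j, pd (fun u => pd (fun y => L (t, u, y)) i (x' t)) j (x t)
        = fderiv ℝ (fun z : ℝ × (Fin n → ℝ) × (Fin n → ℝ) =>
            fderiv ℝ L z (0, 0, Pi.single i 1)) (t, x t, x' t) (0, Pi.single j 1, 0) := by
      intro j
      have h0 : (fun u => pd (fun y => L (t, u, y)) i (x' t))
          = fun u => fderiv ℝ L (t, u, x' t) (0, 0, Pi.single i 1) :=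
        funext fun u => stmt15_pd_slice_y L hLd t u (x' t) i
      rw [h0]
      exact stmt15_pd_slice_x _ (hFvd i) t (x t) (x' t) j
    have hT : deriv (fun s => pd (fun y => L (s, x t, y)) i (x' t)) t
        = fderiv ℝ (fun z : ℝ × (Fin n → ℝ) × (Fin n → ℝ) =>
            fderiv ℝ L z (0, 0, Pi.single i 1)) (t, x t, x' t) (1, 0, 0) := by
      have h0 : (fun s => pd (fun y => L (s, x t, y)) i (x' t))
          = fun s => fderiv ℝ L (s, x t, x' t) (0, 0, Pi.single i 1) :=
        funext fun s => stmt15_pd_slice_y L hLd s (x t) (x' t) i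
      rw [h0]
      exact stmt15_deriv_slice_t _ (hFvd i) t (x t) (x' t)
    have hyy : ∀ j, fderiv ℝ (fun z : ℝ × (Fin n → ℝ) × (Fin n → ℝ) =>
          fderiv ℝ L z (0, 0, Pi.single i 1)) (t, x t, x' t) (0, 0, Pi.single j 1)
        = 2 * ((h11 t)⁻¹ * g (t, x t, x' t) i j) := by
      intro j
      have h1 := hreg t (x t) (x' t) j i
      have h0 : (fun y' => pd (fun y'' => L (t, x t, y'')) i y')
          = fun y' => fderiv ℝ L (t, x t, y') (0, 0, Pi.single i 1) :=
        funext fun y' => stmt15_pd_slice_y L hLd t (x t) y' i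
      rw [h0, stmt15_pd_slice_y _ (hFvd i)] at h1
      rw [hgs (t, x t, x' t) i j]
      linarith
    have hy0 : pd (fun y => L (t, x t, y)) i (x' t)
        = fderiv ℝ L (t, x t, x' t) (0, 0, Pi.single i 1) :=
      stmt15_pd_slice_y L hLd t (x t) (x' t) i
    have hx0 : pd (fun u => L (t, u, x' t)) i (x t)
        = fderiv ℝ L (t, x t, x' t) (0, Pi.single i 1, 0) :=
      stmt15_pd_slice_x L hLd t (x t) (x' t) i
    rw [hB, hC, hD, hSdef]
    simp only [hxy, hyy, hy0, hx0, hT]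
    have hsum : (∑ j, 2 * ((h11 t)⁻¹ * g (t, x t, x' t) i j) * x'' t j)
        = 2 * (∑ j, g (t, x t, x' t) i j * (h11 t)⁻¹ * H t * x' t j)
          + 2 * (h11 t)⁻¹ * ∑ j, g (t, x t, x' t) i j * (x'' t j - H t * x' t j) := by
      simp only [Finset.mul_sum]
      rw [← Finset.sum_add_distrib]
      exact Finset.sum_congr rfl fun j _ => by ring
    rw [hsum]
    ring
  -- geodesic expression in terms of S
  have hGEOS : ∀ (k : Fin n) (t : ℝ),
      (h11 t)⁻¹ * (x'' t k - H t * x' t k) + twoG t k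
        = ∑ i, gI (t, x t, x' t) k i / 2 * S i t := by
    intro k t
    rw [htwoG t k, hSdef]
    have hcancel : ∑ i, gI (t, x t, x' t) k i / 2 *
          (2 * (h11 t)⁻¹ * ∑ j, g (t, x t, x' t) i j * (x'' t j - H t * x' t j))
        = (h11 t)⁻¹ * (x'' t k - H t * x' t k) := by
      have h1 : ∀ i : Fin n, gI (t, x t, x' t) k i / 2 *
            (2 * (h11 t)⁻¹ * ∑ j, g (t, x t, x' t) i j * (x'' t j - H t * x' t j))
          = ∑ j, (h11 t)⁻¹ * (gI (t, x t, x' t) k i * g (t, x t, x' t) i j)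
              * (x'' t j - H t * x' t j) := by
        intro i
        simp only [Finset.mul_sum]
        exact Finset.sum_congr rfl fun j _ => by ring
      simp_rw [h1]
      rw [Finset.sum_comm]
      have h2 : ∀ j : Fin n,
          (∑ i, (h11 t)⁻¹ * (gI (t, x t, x' t) k i * g (t, x t, x' t) i j)
            * (x'' t j - H t * x' t j))
          = if k = j then (h11 t)⁻¹ * (x'' t j - H t * x' t j) else 0 := by
        intro j
        have hid : (if k = j then (h11 t)⁻¹ * (x'' t j - H t * x' t j) else 0)
            = (∑ i, gI (t, x t, x' t) k i * g (t, x t, x' t) i j)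
              * ((h11 t)⁻¹ * (x'' t j - H t * x' t j)) := by
          rw [hgi2 (t, x t, x' t) k j]
          split_ifs <;> simp
        rw [hid, Finset.sum_mul]
        exact Finset.sum_congr rfl fun i _ => by ring
      simp_rw [h2]
      simp
    calc (h11 t)⁻¹ * (x'' t k - H t * x' t k) + ∑ i, gI (t, x t, x' t) k i / 2 *
          ((∑ j, pd (fun u => pd (fun y => L (t, u, y)) i (x' t)) j (x t) * x' t j)
            - pd (fun u => L (t, u, x' t)) i (x t)
            + deriv (fun s => pd (fun y => L (s, x t, y)) i (x' t)) t
            + pd (fun y => L (t, x t, y)) i (x' t) * H t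
            + 2 * (∑ j, g (t, x t, x' t) i j * (h11 t)⁻¹ * H t * x' t j))
        = ∑ i, (gI (t, x t, x' t) k i / 2 *
          ((∑ j, pd (fun u => pd (fun y => L (t, u, y)) i (x' t)) j (x t) * x' t j)
            - pd (fun u => L (t, u, x' t)) i (x t)
            + deriv (fun s => pd (fun y => L (s, x t, y)) i (x' t)) t
            + pd (fun y => L (t, x t, y)) i (x' t) * H t
            + 2 * (∑ j, g (t, x t, x' t) i j * (h11 t)⁻¹ * H t * x' t j))
          + gI (t, x t, x' t) k i / 2 *
            (2 * (h11 t)⁻¹ * ∑ j, g (t, x t, x' t) i j * (x'' t j - H t * x' t j))) := by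
          rw [Finset.sum_add_distrib, hcancel]
          ring
      _ = _ := by
          exact Finset.sum_congr rfl fun i _ => by ring
  -- main equivalence
  constructor
  · intro hEL k t
    rw [hGEOS k t]
    apply Finset.sum_eq_zero
    intro i _
    have h0 := hEL i t
    rw [hELS i t] at h0
    have hS0 : S i t = 0 := by
      rcases mul_eq_zero.mp h0 with h | h
      · exact absurd h (hsq t)
      · exact h
    rw [hS0, mul_zero]
  · intro hG i t
    rw [hELS i t]
    have hS0 : ∀ m : Fin n, (∑ i', gI (t, x t, x' t) m i' / 2 * S i' t) = 0 := by
      intro m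
      rw [← hGEOS m t]
      exact hG m t
    have hfin : S i t = 0 := by
      have e1 : S i t = ∑ m, (if i = m then (1:ℝ) else 0) * S m t := by
        rw [eq_comm]
        simp
      have e2 : ∀ m, (if i = m then (1:ℝ) else 0)
          = ∑ j, g (t, x t, x' t) i j * gI (t, x t, x' t) j m :=
        fun m => (hgi1 (t, x t, x' t) i m).symm
      have e3 : ∑ m, (∑ j, g (t, x t, x' t) i j * gI (t, x t, x' t) j m) * S m t
          = ∑ j, 2 * g (t, x t, x' t) i j * (∑ m, gI (t, x t, x' t) j m / 2 * S m t) := by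
        simp_rw [Finset.sum_mul, Finset.mul_sum]
        rw [Finset.sum_comm]
        exact Finset.sum_congr rfl fun j _ => Finset.sum_congr rfl fun m _ => by ring
      calc S i t = ∑ m, (if i = m then (1:ℝ) else 0) * S m t := e1
        _ = ∑ m, (∑ j, g (t, x t, x' t) i j * gI (t, x t, x' t) j m) * S m t := by
            exact Finset.sum_congr rfl fun m _ => by rw [← e2 m]
        _ = ∑ j, 2 * g (t, x t, x' t) i j * (∑ m, gI (t, x t, x' t) j m / 2 * S m t) := e3
        _ = 0 := by
            simp only [hS0, mul_zero, Finset.sum_const_zero]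
    rw [hfin, mul_zero]
end
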